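/- If (x,y) and (x',y') in R² have the same forward itinerary, i.e., for every k ≥ 0 the points T^k(x,y) and T^k(x',y') lie in the same vertical strip D_{1/q}(s_k) × R, then ‖Tⁿ(x,y) - Tⁿ(x',y')‖ → 0 as n → ∞; in fact ‖Tⁿ(x,y) - Tⁿ(x',y')‖ ≤ |a|^{n-1}/qⁿ for all n ≥ 1. -/

import Mathlib

open scoped Classical
open MeasureTheory Filter

noncomputable section

/-- A complete, locally compact non-Archimedean field with residue field of
order `q`, absolute value normalized so that a uniformizer has norm `1/q`.
`reps` is a set of `q` coset representatives for the residue field: they cover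
the ring of integers by discs of radius `1/q` and are pairwise at distance
`> 1/q`. -/
structure NAField (K : Type*) [NormedField K] where
  na : IsNonarchimedean (fun x : K => ‖x‖)
  complete : CompleteSpace K
  locCompact : LocallyCompactSpace K
  q : ℕ
  one_lt_q : 1 < q
  valGroup : ∀ x : K, x ≠ 0 → ∃ n : ℤ, ‖x‖ = (q : ℝ) ^ n
  exists_unif : ∃ ϖ : K, ‖ϖ‖ = (q : ℝ)⁻¹
  reps : Finset K
  card_reps : reps.card = q
  norm_reps : ∀ s ∈ reps, ‖s‖ ≤ 1
  reps_cover : ∀ x : K, ‖x‖ ≤ 1 → ∃ s ∈ reps, ‖x - s‖ ≤ (q : ℝ)⁻¹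
  reps_sep : ∀ s ∈ reps, ∀ t ∈ reps, s ≠ t → (q : ℝ)⁻¹ < ‖s - t‖

variable {K : Type*} [NormedField K]

/-- `f : R → R` is `(1/q)`-Lipschitz on the ring of integers. -/
def NAField.IsLip (F : NAField K) (f : K → K) : Prop :=
  (∀ t : K, ‖t‖ ≤ 1 → ‖f t‖ ≤ 1) ∧
  ∀ t₁ t₂ : K, ‖t₁‖ ≤ 1 → ‖t₂‖ ≤ 1 → ‖f t₁ - f t₂‖ ≤ ((F.q : ℝ))⁻¹ * ‖t₁ - t₂‖

/-- The unit polydisc `R² ⊆ K²`. -/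
def unitPoly (K : Type*) [NormedField K] : Set (K × K) := {p | ‖p.1‖ ≤ 1 ∧ ‖p.2‖ ≤ 1}

/-- Horizontal `δ`-neighborhood `H_δ(f) = {(t, f t + θ) : t ∈ R, |θ| ≤ δ}`. -/
def Hnbhd (f : K → K) (δ : ℝ) : Set (K × K) :=
  {p | ∃ t θ : K, ‖t‖ ≤ 1 ∧ ‖θ‖ ≤ δ ∧ p = (t, f t + θ)}

/-- Vertical `δ`-neighborhood `V_δ(f) = {(f t + θ, t) : t ∈ R, |θ| ≤ δ}`. -/
def Vnbhd (f : K → K) (δ : ℝ) : Set (K × K) :=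
  {p | ∃ t θ : K, ‖t‖ ≤ 1 ∧ ‖θ‖ ≤ δ ∧ p = (f t + θ, t)}

/-- The automorphism `T(x,y) = (a y + b (x^q - x), x)`. -/
def NAField.Tmap (F : NAField K) (a b : K) : K × K → K × K :=
  fun p => (a * p.2 + b * (p.1 ^ F.q - p.1), p.1)

/-- The inverse automorphism `T⁻¹(x,y) = (y, a⁻¹ (x - b (y^q - y)))`. -/
def NAField.Tinv (F : NAField K) (a b : K) : K × K → K × K :=
  fun p => (p.2, a⁻¹ * (p.1 - b * (p.2 ^ F.q - p.2)))

/-- The attractor `A_T = ⋂_{n ≥ 1} Tⁿ(R²)`. -/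
def NAField.Attractor (F : NAField K) (a b : K) : Set (K × K) :=
  ⋂ n ∈ {n : ℕ | 1 ≤ n}, (F.Tmap a b)^[n] '' unitPoly K

/-- The basin of attraction `B_T = ⋃_{n ≥ 1} T⁻ⁿ(R²)`. -/
def NAField.Basin (F : NAField K) (a b : K) : Set (K × K) :=
  ⋃ n ∈ {n : ℕ | 1 ≤ n}, (F.Tmap a b)^[n] ⁻¹' unitPoly K

/-- `T^k` for `k : ℤ`. -/
def NAField.iterZ (F : NAField K) (a b : K) (k : ℤ) : K × K → K × K :=
  if 0 ≤ k then (F.Tmap a b)^[k.toNat] else (F.Tinv a b)^[(-k).toNat]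

/-- The image under the conjugacy `ω` of the cylinder set of bisequences
agreeing with `s` on coordinates `-M, …, M`: points of the attractor whose
itinerary through the residue strips matches `s` on those coordinates. -/
def NAField.Cyl (F : NAField K) (a b : K) (s : ℤ → K) (M : ℕ) : Set (K × K) :=
  {p | p ∈ F.Attractor a b ∧
    ∀ k : ℤ, |k| ≤ (M : ℤ) → ‖(F.iterZ a b k p).1 - s k‖ ≤ ((F.q : ℝ))⁻¹}

/-!
Write `xₙ` for the first coordinate of `Tⁿ(x, y)`; the second one is `xₙ₋₁`, and
`xₙ₊₂ = a xₙ + b (xₙ₊₁ ^ q - xₙ₊₁)`. Since the residue field has `q` elements, `|q| ≤ 1/q`, which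
makes `t ↦ t ^ q - t` an isometry on each residue disc. Hence for two orbits with the same
itinerary, `uₙ = |xₙ - x'ₙ|` satisfies `uₙ ≤ 1/q` and `q uₙ₊₁ ≤ max (uₙ₊₂, |a| uₙ)`.
If `q uₙ₊₁ > |a| uₙ` for some `n`, then `uₙ₊₂ ≥ q uₙ₊₁` and the strict inequality persists at
`n + 1`, so `u` would grow geometrically. So `uₙ₊₁ ≤ (|a| / q) uₙ`, i.e. `uₙ ≤ |a|ⁿ / qⁿ⁺¹`.
-/

namespace IsUltrametricDist

theorem norm_sub_le_max {S : Type*} [SeminormedAddGroup S] [IsUltrametricDist S] (x y : S) :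
    ‖x - y‖ ≤ max ‖x‖ ‖y‖ := by
  simpa [sub_eq_add_neg] using norm_add_le_max x (-y)

variable [IsUltrametricDist K] {x y : K}

theorem norm_pow_sub_pow_le_norm_sub (hx : ‖x‖ ≤ 1) (hy : ‖y‖ ≤ 1) (n : ℕ) :
    ‖x ^ n - y ^ n‖ ≤ ‖x - y‖ := by
  rw [← geom_sum₂_mul, norm_mul]
  refine mul_le_of_le_one_left (norm_nonneg _) (norm_sum_le_of_forall_le_of_nonneg zero_le_one ?_)
  intro i _
  rw [norm_mul, norm_pow, norm_pow]
  exact mul_le_one₀ (pow_le_one₀ (norm_nonneg _) hx) (by positivity) (pow_le_one₀ (norm_nonneg _) hy)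

/-- The terms of `∑ xⁱ yⁿ⁻¹⁻ⁱ = (xⁿ - yⁿ) / (x - y)` are all congruent to `xⁿ⁻¹` modulo `r`,
so the sum is congruent to `n xⁿ⁻¹`. -/
theorem norm_pow_sub_pow_le_mul {r : ℝ} {n : ℕ} (hx : ‖x‖ ≤ 1) (hy : ‖y‖ ≤ 1)
    (hn : ‖(n : K)‖ ≤ r) (hxy : ‖x - y‖ ≤ r) : ‖x ^ n - y ^ n‖ ≤ r * ‖x - y‖ := by
  rw [← geom_sum₂_mul, norm_mul]
  gcongr
  have hr : 0 ≤ r := (norm_nonneg _).trans hn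
  have hsum : ∑ i ∈ Finset.range n, x ^ i * y ^ (n - 1 - i) - n * x ^ (n - 1) =
      ∑ i ∈ Finset.range n, x ^ i * (y ^ (n - 1 - i) - x ^ (n - 1 - i)) := by
    rw [show (n : K) * x ^ (n - 1) = ∑ _i ∈ Finset.range n, x ^ (n - 1) by simp,
      ← Finset.sum_sub_distrib]
    refine Finset.sum_congr rfl fun i hi => ?_
    rw [mul_sub, ← pow_add, Nat.add_sub_cancel' (Nat.le_sub_one_of_lt (Finset.mem_range.1 hi))]
  have hterms : ‖∑ i ∈ Finset.range n, x ^ i * y ^ (n - 1 - i) - n * x ^ (n - 1)‖ ≤ r := by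
    rw [hsum]
    refine norm_sum_le_of_forall_le_of_nonneg hr fun i _ => ?_
    rw [norm_mul, norm_pow]
    exact (mul_le_of_le_one_left (norm_nonneg _) (pow_le_one₀ (norm_nonneg _) hx)).trans
      ((norm_pow_sub_pow_le_norm_sub hy hx _).trans ((norm_sub_rev y x).trans_le hxy))
  have hlead : ‖(n : K) * x ^ (n - 1)‖ ≤ r := by
    rw [norm_mul, norm_pow]
    exact (mul_le_of_le_one_right (norm_nonneg _) (pow_le_one₀ (norm_nonneg _) hx)).trans hn
  simpa using (norm_add_le_max _ _).trans (max_le hterms hlead)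

theorem norm_pow_sub_self_sub_pow_sub_self {r : ℝ} {n : ℕ} (hx : ‖x‖ ≤ 1) (hy : ‖y‖ ≤ 1)
    (hr : r < 1) (hn : ‖(n : K)‖ ≤ r) (hxy : ‖x - y‖ ≤ r) :
    ‖(x ^ n - x) - (y ^ n - y)‖ = ‖x - y‖ := by
  rcases eq_or_ne x y with rfl | hne
  · simp
  have hlt : ‖x ^ n - y ^ n‖ < ‖x - y‖ :=
    (norm_pow_sub_pow_le_mul hx hy hn hxy).trans_lt
      (mul_lt_of_lt_one_left (norm_pos_iff.2 (sub_ne_zero.2 hne)) hr)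
  rw [show (x ^ n - x) - (y ^ n - y) = (x ^ n - y ^ n) + -(x - y) by ring,
    norm_add_eq_max_of_norm_ne_norm (by rw [norm_neg]; exact hlt.ne), norm_neg, max_eq_right hlt.le]

/-- Lagrange's theorem for the quotient of the unit ball by `closedBall 0 r`, of which `s` is a
transversal. -/
theorem norm_natCast_card_le {s : Finset K} {r : ℝ} (hr : 0 < r) (hs : ∀ t ∈ s, ‖t‖ ≤ 1)
    (hcover : ∀ x : K, ‖x‖ ≤ 1 → ∃ t ∈ s, ‖x - t‖ ≤ r)
    (hsep : ∀ t ∈ s, ∀ t' ∈ s, t ≠ t' → r < ‖t - t'‖) : ‖(s.card : K)‖ ≤ r := by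
  set B : AddSubgroup K := (closedBall_openAddSubgroup K one_pos).toAddSubgroup
  set H : AddSubgroup K := (closedBall_openAddSubgroup K hr).toAddSubgroup
  have hmemB : ∀ {x : K}, x ∈ B ↔ ‖x‖ ≤ 1 := mem_closedBall_zero_iff
  have hmemH : ∀ {x : K}, x ∈ H ↔ ‖x‖ ≤ r := mem_closedBall_zero_iff
  let g : s → B ⧸ H.addSubgroupOf B := fun t => QuotientAddGroup.mk ⟨t, hmemB.2 (hs t t.2)⟩
  have hg : Function.Bijective g := by
    constructor
    · rintro ⟨t, ht⟩ ⟨t', ht'⟩ htt'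
      by_contra hne
      rw [QuotientAddGroup.eq, AddSubgroup.mem_addSubgroupOf, hmemH] at htt'
      have := hsep t' ht' t ht fun h => hne (Subtype.ext h.symm)
      simp only [neg_add_eq_sub, AddSubgroupClass.coe_sub] at htt'
      exact this.not_ge htt'
    · rintro ⟨x⟩
      obtain ⟨t, ht, hxt⟩ := hcover x (hmemB.1 x.2)
      refine ⟨⟨t, ht⟩, QuotientAddGroup.eq.2 ?_⟩
      rw [AddSubgroup.mem_addSubgroupOf, hmemH]
      simpa [neg_add_eq_sub] using hxt
  have hindex : H.relIndex B = s.card := by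
    rw [AddSubgroup.relIndex, AddSubgroup.index, ← Nat.card_eq_of_bijective g hg,
      Nat.card_eq_finsetCard]
  simpa [hindex, hmemH] using AddSubgroup.nsmul_relIndex_mem H (hmemB.2 norm_one.le)

end IsUltrametricDist

section UltrametricRecurrence

variable {u : ℕ → ℝ} {A Q : ℝ}

theorem mul_lt_and_le_of_mul_le_max_of_lt (hu : ∀ n, 0 ≤ u n) (hA : 0 ≤ A) (hQ : 0 < Q)
    (hAQ : A < Q ^ 2) (hrec : ∀ n, Q * u (n + 1) ≤ max (u (n + 2)) (A * u n)) {n : ℕ}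
    (hn : A * u n < Q * u (n + 1)) : A * u (n + 1) < Q * u (n + 2) ∧ Q * u (n + 1) ≤ u (n + 2) := by
  have hgrow : Q * u (n + 1) ≤ u (n + 2) := (le_max_iff.1 (hrec n)).resolve_right hn.not_ge
  have hpos : 0 < u (n + 1) := pos_of_mul_pos_right ((mul_nonneg hA (hu n)).trans_lt hn) hQ.le
  refine ⟨?_, hgrow⟩
  calc A * u (n + 1) < Q ^ 2 * u (n + 1) := by gcongr
    _ = Q * (Q * u (n + 1)) := by ring
    _ ≤ Q * u (n + 2) := by gcongr

theorem mul_le_mul_of_mul_le_max (hu : ∀ n, 0 ≤ u n) (hbdd : BddAbove (Set.range u))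
    (hA : 0 ≤ A) (hQ : 1 < Q) (hAQ : A < Q ^ 2)
    (hrec : ∀ n, Q * u (n + 1) ≤ max (u (n + 2)) (A * u n)) (n : ℕ) :
    Q * u (n + 1) ≤ A * u n := by
  by_contra! hn
  have hQ0 : 0 < Q := one_pos.trans hQ
  have hexp : ∀ k, A * u (n + k) < Q * u (n + k + 1) ∧ Q ^ k * u (n + 1) ≤ u (n + k + 1) := by
    intro k
    induction k with
    | zero => simpa using hn
    | succ k ih =>
      obtain ⟨hlt, hgrow⟩ := mul_lt_and_le_of_mul_le_max_of_lt hu hA hQ0 hAQ hrec ih.1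
      refine ⟨hlt, ?_⟩
      calc Q ^ (k + 1) * u (n + 1) = Q * (Q ^ k * u (n + 1)) := by ring
        _ ≤ Q * u (n + k + 1) := by gcongr; exact ih.2
        _ ≤ u (n + (k + 1) + 1) := hgrow
  obtain ⟨C, hC⟩ := hbdd
  have hpos : 0 < u (n + 1) := pos_of_mul_pos_right ((mul_nonneg hA (hu n)).trans_lt hn) hQ0.le
  obtain ⟨k, hk⟩ := pow_unbounded_of_one_lt (C / u (n + 1)) hQ
  rw [div_lt_iff₀ hpos] at hk
  exact ((hexp k).2.trans (hC ⟨_, rfl⟩)).not_gt hk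

theorem le_pow_div_pow_mul_of_mul_le_max (hu : ∀ n, 0 ≤ u n) (hbdd : BddAbove (Set.range u))
    (hA : 0 ≤ A) (hQ : 1 < Q) (hAQ : A < Q ^ 2)
    (hrec : ∀ n, Q * u (n + 1) ≤ max (u (n + 2)) (A * u n)) (n : ℕ) :
    u n ≤ A ^ n / Q ^ n * u 0 := by
  induction n with
  | zero => simp
  | succ n ih =>
    have hQ0 : 0 < Q := one_pos.trans hQ
    calc u (n + 1) ≤ A / Q * u n := by
          rw [div_mul_eq_mul_div, le_div_iff₀ hQ0, mul_comm]
          exact mul_le_mul_of_mul_le_max hu hbdd hA hQ hAQ hrec n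
      _ ≤ A / Q * (A ^ n / Q ^ n * u 0) := by gcongr
      _ = A ^ (n + 1) / Q ^ (n + 1) * u 0 := by ring

end UltrametricRecurrence

namespace NAField

theorem isUltrametricDist (F : NAField K) : IsUltrametricDist K :=
  IsUltrametricDist.isUltrametricDist_of_isNonarchimedean_norm F.na

variable (F : NAField K)

theorem one_lt_cast_q : (1 : ℝ) < F.q := mod_cast F.one_lt_q

theorem norm_natCast_q_le : ‖(F.q : K)‖ ≤ (F.q : ℝ)⁻¹ := by
  have := F.isUltrametricDist
  simpa [F.card_reps] using IsUltrametricDist.norm_natCast_card_le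
    (inv_pos.2 (one_pos.trans F.one_lt_cast_q)) F.norm_reps F.reps_cover F.reps_sep

theorem norm_le_one_and_norm_sub_le_of_mem_disc {x x' s : K} (hs : s ∈ F.reps)
    (hx : ‖x - s‖ ≤ (F.q : ℝ)⁻¹) (hx' : ‖x' - s‖ ≤ (F.q : ℝ)⁻¹) :
    ‖x‖ ≤ 1 ∧ ‖x'‖ ≤ 1 ∧ ‖x - x'‖ ≤ (F.q : ℝ)⁻¹ := by
  have := F.isUltrametricDist
  have hq : (F.q : ℝ)⁻¹ ≤ 1 := inv_le_one_of_one_le₀ F.one_lt_cast_q.le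
  have hmem : ∀ y : K, ‖y - s‖ ≤ (F.q : ℝ)⁻¹ → ‖y‖ ≤ 1 := fun y hy => by
    simpa using (IsUltrametricDist.norm_add_le_max (y - s) s).trans
      (max_le (hy.trans hq) (F.norm_reps s hs))
  refine ⟨hmem x hx, hmem x' hx', ?_⟩
  simpa using (IsUltrametricDist.norm_sub_le_max (x - s) (x' - s)).trans (max_le hx hx')

variable (a b : K) (p p' : K × K) (n : ℕ)

theorem Tmap_iterate_succ_snd : ((F.Tmap a b)^[n + 1] p).2 = ((F.Tmap a b)^[n] p).1 := by
  rw [Function.iterate_succ_apply']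
  rfl

theorem Tmap_iterate_add_two_fst : ((F.Tmap a b)^[n + 2] p).1 =
    a * ((F.Tmap a b)^[n] p).1 +
      b * (((F.Tmap a b)^[n + 1] p).1 ^ F.q - ((F.Tmap a b)^[n + 1] p).1) := by
  rw [Function.iterate_succ_apply' _ (n + 1), ← F.Tmap_iterate_succ_snd a b p n]
  rfl

variable {a b}

theorem mul_norm_iterate_fst_sub_le (hb : ‖b‖ = (F.q : ℝ))
    (hx : ‖((F.Tmap a b)^[n + 1] p).1‖ ≤ 1) (hx' : ‖((F.Tmap a b)^[n + 1] p').1‖ ≤ 1)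
    (hxx' : ‖((F.Tmap a b)^[n + 1] p).1 - ((F.Tmap a b)^[n + 1] p').1‖ ≤ (F.q : ℝ)⁻¹) :
    F.q * ‖((F.Tmap a b)^[n + 1] p).1 - ((F.Tmap a b)^[n + 1] p').1‖ ≤
      max ‖((F.Tmap a b)^[n + 2] p).1 - ((F.Tmap a b)^[n + 2] p').1‖
        (‖a‖ * ‖((F.Tmap a b)^[n] p).1 - ((F.Tmap a b)^[n] p').1‖) := by
  have := F.isUltrametricDist
  set x := ((F.Tmap a b)^[n + 1] p).1
  set x' := ((F.Tmap a b)^[n + 1] p').1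
  have hiso : ‖(x ^ F.q - x) - (x' ^ F.q - x')‖ = ‖x - x'‖ :=
    IsUltrametricDist.norm_pow_sub_self_sub_pow_sub_self hx hx'
      (inv_lt_one_of_one_lt₀ F.one_lt_cast_q) F.norm_natCast_q_le hxx'
  have hdiff : b * ((x ^ F.q - x) - (x' ^ F.q - x')) =
      (((F.Tmap a b)^[n + 2] p).1 - ((F.Tmap a b)^[n + 2] p').1) -
        a * (((F.Tmap a b)^[n] p).1 - ((F.Tmap a b)^[n] p').1) := by
    rw [F.Tmap_iterate_add_two_fst, F.Tmap_iterate_add_two_fst]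
    ring
  rw [← hb, ← hiso, ← norm_mul, hdiff, ← norm_mul]
  exact IsUltrametricDist.norm_sub_le_max _ _

theorem norm_iterate_fst_sub_le (ha : ‖a‖ < (F.q : ℝ) ^ 2) (hb : ‖b‖ = (F.q : ℝ))
    (hsame : ∀ k : ℕ, ∃ s ∈ F.reps,
      ‖((F.Tmap a b)^[k] p).1 - s‖ ≤ ((F.q : ℝ))⁻¹ ∧
      ‖((F.Tmap a b)^[k] p').1 - s‖ ≤ ((F.q : ℝ))⁻¹) :
    ‖((F.Tmap a b)^[n] p).1 - ((F.Tmap a b)^[n] p').1‖ ≤ ‖a‖ ^ n / (F.q : ℝ) ^ (n + 1) := by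
  have hdisc : ∀ k, ‖((F.Tmap a b)^[k] p).1‖ ≤ 1 ∧ ‖((F.Tmap a b)^[k] p').1‖ ≤ 1 ∧
      ‖((F.Tmap a b)^[k] p).1 - ((F.Tmap a b)^[k] p').1‖ ≤ (F.q : ℝ)⁻¹ := fun k => by
    obtain ⟨s, hs, hx, hx'⟩ := hsame k
    exact F.norm_le_one_and_norm_sub_le_of_mem_disc hs hx hx'
  have hq := F.one_lt_cast_q
  have hdecay := le_pow_div_pow_mul_of_mul_le_max (fun k => norm_nonneg _)
    ⟨_, Set.forall_mem_range.2 fun k => (hdisc k).2.2⟩ (norm_nonneg a) hq ha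
    (fun k => F.mul_norm_iterate_fst_sub_le p p' k hb (hdisc (k + 1)).1 (hdisc (k + 1)).2.1
      (hdisc (k + 1)).2.2) n
  calc _ ≤ _ := hdecay
    _ ≤ ‖a‖ ^ n / (F.q : ℝ) ^ n * (F.q : ℝ)⁻¹ := by gcongr; simpa using (hdisc 0).2.2
    _ = ‖a‖ ^ n / (F.q : ℝ) ^ (n + 1) := by ring

theorem max_norm_iterate_sub_le (ha : ‖a‖ < 1) (hb : ‖b‖ = (F.q : ℝ))
    (hsame : ∀ k : ℕ, ∃ s ∈ F.reps,
      ‖((F.Tmap a b)^[k] p).1 - s‖ ≤ ((F.q : ℝ))⁻¹ ∧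
      ‖((F.Tmap a b)^[k] p').1 - s‖ ≤ ((F.q : ℝ))⁻¹) (hn : 1 ≤ n) :
    max ‖((F.Tmap a b)^[n] p).1 - ((F.Tmap a b)^[n] p').1‖
        ‖((F.Tmap a b)^[n] p).2 - ((F.Tmap a b)^[n] p').2‖
      ≤ ‖a‖ ^ (n - 1) / (F.q : ℝ) ^ n := by
  have hq := F.one_lt_cast_q
  have hdecay k := F.norm_iterate_fst_sub_le p p' k
    (ha.trans (one_lt_pow₀ hq two_ne_zero)) hb hsame
  obtain ⟨m, rfl⟩ : ∃ m, n = m + 1 := ⟨n - 1, by omega⟩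
  rw [F.Tmap_iterate_succ_snd, F.Tmap_iterate_succ_snd, Nat.add_sub_cancel]
  refine max_le ((hdecay (m + 1)).trans ?_) (hdecay m)
  exact div_le_div₀ (by positivity) (pow_le_pow_of_le_one (norm_nonneg a) ha.le m.le_succ)
    (by positivity) (pow_le_pow_right₀ hq.le (m + 1).le_succ)

end NAField

theorem stmt18_general (F : NAField K) (a b : K) (ha : ‖a‖ < 1)
    (hb : ‖b‖ = (F.q : ℝ)) (p p' : K × K)
    (hsame : ∀ k : ℕ, ∃ s ∈ F.reps,
      ‖((F.Tmap a b)^[k] p).1 - s‖ ≤ ((F.q : ℝ))⁻¹ ∧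
      ‖((F.Tmap a b)^[k] p').1 - s‖ ≤ ((F.q : ℝ))⁻¹) :
    (∀ n : ℕ, 1 ≤ n →
      max ‖((F.Tmap a b)^[n] p).1 - ((F.Tmap a b)^[n] p').1‖
          ‖((F.Tmap a b)^[n] p).2 - ((F.Tmap a b)^[n] p').2‖
        ≤ ‖a‖ ^ (n - 1) / (F.q : ℝ) ^ n) ∧
    Filter.Tendsto (fun n : ℕ =>
      max ‖((F.Tmap a b)^[n] p).1 - ((F.Tmap a b)^[n] p').1‖
          ‖((F.Tmap a b)^[n] p).2 - ((F.Tmap a b)^[n] p').2‖)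
      Filter.atTop (nhds 0) := by
  have hbound n := F.max_norm_iterate_sub_le p p' n ha hb hsame
  refine ⟨hbound, squeeze_zero' (.of_forall fun n => (norm_nonneg _).trans (le_max_left _ _))
    ((eventually_ge_atTop 1).mono fun n hn => (hbound n hn).trans ?_)
    (tendsto_pow_atTop_nhds_zero_of_lt_one (by positivity)
      (inv_lt_one_of_one_lt₀ F.one_lt_cast_q))⟩
  rw [inv_pow, div_eq_mul_inv]
  exact mul_le_of_le_one_left (by positivity) (pow_le_one₀ (norm_nonneg a) ha.le)

theorem stmt18 (F : NAField K) (a b : K) (ha0 : a ≠ 0) (ha : ‖a‖ < 1)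
    (hb : ‖b‖ = (F.q : ℝ)) (p p' : K × K)
    (hp : p ∈ unitPoly K) (hp' : p' ∈ unitPoly K)
    (hsame : ∀ k : ℕ, ∃ s ∈ F.reps,
      ‖((F.Tmap a b)^[k] p).1 - s‖ ≤ ((F.q : ℝ))⁻¹ ∧
      ‖((F.Tmap a b)^[k] p').1 - s‖ ≤ ((F.q : ℝ))⁻¹) :
    (∀ n : ℕ, 1 ≤ n →
      max ‖((F.Tmap a b)^[n] p).1 - ((F.Tmap a b)^[n] p').1‖
          ‖((F.Tmap a b)^[n] p).2 - ((F.Tmap a b)^[n] p').2‖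
        ≤ ‖a‖ ^ (n - 1) / (F.q : ℝ) ^ n) ∧
    Filter.Tendsto (fun n : ℕ =>
      max ‖((F.Tmap a b)^[n] p).1 - ((F.Tmap a b)^[n] p').1‖
          ‖((F.Tmap a b)^[n] p).2 - ((F.Tmap a b)^[n] p').2‖)
      Filter.atTop (nhds 0) :=
  stmt18_general F a b ha hb p p' hsame
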